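/- Let n ≥ 3 and A₀, A₁, A₂ be real symmetric n×n matrices with s₀A₀ + s₁A₁ + s₂A₂ positive definite for some reals s₀, s₁, s₂. Consider the problem min xᵀA₀x subject to m₁ ≤ xᵀA₁x ≤ M₁ and m₂ ≤ xᵀA₂x ≤ M₂, with m₁ < M₁, m₂ < M₂, and assume there exists x̃ with m₁ < x̃ᵀA₁x̃ < M₁ and m₂ < x̃ᵀA₂x̃ < M₂. Then the optimal value of this problem equals the optimal value of its Lagrangian dual: sup{λ₁m₁ − μ₁M₁ + λ₂m₂ − μ₂M₂ : λ₁,μ₁,λ₂,μ₂ ≥ 0, A₀ + (μ₁−λ₁)A₁ + (μ₂−λ₂)A₂ ⪰ 0}. -/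

import Mathlib

/-!
By Brickman's theorem, for `n ≥ 3` the map `x ↦ (xᵀQx, xᵀRx)` sends the unit sphere onto a convex
set. The unit vectors mapped to a given line form `{‖x‖ = 1, xᵀCx = 0}` for a symmetric `C`. After
diagonalising `C`, a path in this set can change the sign of each coordinate that vanishes somewhere
on the set, and for `n ≥ 3` at most one coordinate never does; so `u` is joined to `v` or to `-v`,
which have the same image, and the intermediate value theorem along that path gives convexity.
Homogenising, and substituting `x = S⁻¹y` where `P = SᵀS` is a positive definite combination of the
`Aᵢ`, gives Polyak's theorem: the joint range `{(xᵀA₀x, xᵀA₁x, xᵀA₂x)}` is a convex cone.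

For strong duality, separate this cone by Hahn–Banach from the open box
`{y₀ < v, m₁ < y₁ < M₁, m₂ < y₂ < M₂}`, where `v` is below the primal value. The Slater point makes
the `y₀`-coefficient positive. Because the range is a cone, the normalised functional
`y₀ + r₁y₁ + r₂y₂` is nonnegative on it, i.e. `A₀ + r₁A₁ + r₂A₂ ⪰ 0`. Splitting `rᵢ` into positive
and negative parts then gives a dual feasible point with value at least `v`.
-/

open Matrix Set

section SignPatterns

variable {ι : Type*} {D : Set (ι → ℝ)}

theorem joinedIn_of_mul_nonneg (hD : Convex ℝ D) {u v : ι → ℝ} (hu : u ^ 2 ∈ D)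
    (hv : v ^ 2 ∈ D) (huv : ∀ i, 0 ≤ u i * v i) : JoinedIn {y | y ^ 2 ∈ D} u v := by
  -- keep the common sign pattern `σ` and move the squares along the segment from `u²` to `v²`
  let σ : ι → ℝ := fun i => if u i + v i < 0 then -1 else 1
  let γ : ℝ → ι → ℝ := fun t i => σ i * √((1 - t) * u i ^ 2 + t * v i ^ 2)
  have hσ_sq (i : ι) : σ i ^ 2 = 1 := by
    simp only [σ]; split_ifs <;> norm_num
  have hσ_abs (i : ι) : σ i * |u i| = u i ∧ σ i * |v i| = v i := by
    have := huv i
    simp only [σ]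
    split_ifs
    · rw [abs_of_nonpos (by nlinarith), abs_of_nonpos (by nlinarith)]; simp
    · rw [abs_of_nonneg (by nlinarith), abs_of_nonneg (by nlinarith)]; simp
  have hγ_sq : ∀ t ∈ Icc (0 : ℝ) 1, γ t ^ 2 = (1 - t) • u ^ 2 + t • v ^ 2 := by
    rintro t ⟨ht₀, ht₁⟩
    ext i
    have : 0 ≤ (1 - t) * u i ^ 2 + t * v i ^ 2 := by
      have : 0 ≤ 1 - t := by linarith
      positivity
    simp [γ, mul_pow, hσ_sq, Real.sq_sqrt this]
  refine JoinedIn.ofLine (f := γ) (Continuous.continuousOn (by fun_prop)) ?_ ?_ ?_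
  · ext i; simp [γ, Real.sqrt_sq_eq_abs, hσ_abs]
  · ext i; simp [γ, Real.sqrt_sq_eq_abs, hσ_abs]
  · rintro _ ⟨t, ht, rfl⟩
    show γ t ^ 2 ∈ D
    rw [hγ_sq t ht]
    exact hD hu hv (by linarith [ht.2]) ht.1 (by ring)

theorem joinedIn_update_neg [DecidableEq ι] (hD : Convex ℝ D) {u q : ι → ℝ} (hu : u ^ 2 ∈ D)
    (hq : q ∈ D) (hq₀ : 0 ≤ q) {i : ι} (hqi : q i = 0) :
    JoinedIn {y | y ^ 2 ∈ D} u (Function.update u i (-u i)) := by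
  -- `u` and its flip both have the signs of `m`, which vanishes at `i`
  let m : ι → ℝ := fun j => if u j < 0 then -√(q j) else √(q j)
  have hm : m ^ 2 ∈ D := by
    convert hq using 1
    ext j; by_cases h : u j < 0 <;> simp [m, h, Real.sq_sqrt (hq₀ j)]
  have hum (j : ι) : 0 ≤ u j * m j := by
    by_cases h : u j < 0
    · simp only [m, h, if_true]; nlinarith [Real.sqrt_nonneg (q j)]
    · simp only [m, h, if_false]; exact mul_nonneg (not_lt.1 h) (Real.sqrt_nonneg _)
  have hflip : Function.update u i (-u i) ^ 2 = u ^ 2 := by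
    ext j; by_cases h : j = i <;> simp [h]
  refine (joinedIn_of_mul_nonneg hD hu hm hum).trans
    (joinedIn_of_mul_nonneg hD (hflip ▸ hu) hm fun j => ?_).symm
  by_cases h : j = i
  · subst h; simp [m, hqi]
  · simpa [Function.update_apply, h] using hum j

theorem joinedIn_of_forall_mul_neg [Fintype ι] (hD : Convex ℝ D) (hD₀ : ∀ q ∈ D, 0 ≤ q)
    {u v : ι → ℝ} (hu : u ^ 2 ∈ D) (hv : v ^ 2 ∈ D)
    (huv : ∀ i, u i * v i < 0 → ∃ q ∈ D, q i = 0) : JoinedIn {y | y ^ 2 ∈ D} u v := by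
  classical
  suffices ∀ s : Finset ι, ∀ u : ι → ℝ, u ^ 2 ∈ D →
      (∀ i, u i * v i < 0 → i ∈ s ∧ ∃ q ∈ D, q i = 0) → JoinedIn {y | y ^ 2 ∈ D} u v from
    this Finset.univ u hu fun i hi => ⟨Finset.mem_univ i, huv i hi⟩
  intro s
  induction s using Finset.induction_on with
  | empty =>
    exact fun u hu hs => joinedIn_of_mul_nonneg hD hu hv fun i =>
      not_lt.1 fun h => Finset.notMem_empty i (hs i h).1
  | insert a s _ ih =>
    intro u hu hs
    by_cases ha : u a * v a < 0
    · obtain ⟨q, hq, hqa⟩ := (hs a ha).2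
      have hua := joinedIn_update_neg hD hu hq (hD₀ q hq) hqa
      refine hua.trans (ih _ hua.target_mem fun j hj => ?_)
      have hja : j ≠ a := by
        rintro rfl
        rw [Function.update_self] at hj
        nlinarith
      rw [Function.update_of_ne hja] at hj
      exact ⟨(Finset.mem_insert.1 (hs j hj).1).resolve_left hja, (hs j hj).2⟩
    · exact ih u hu fun j hj =>
        ⟨(Finset.mem_insert.1 (hs j hj).1).resolve_left (by rintro rfl; exact ha hj), (hs j hj).2⟩

end SignPatterns

section SimplexSlice

variable {ι : Type*} [Fintype ι] {d : ι → ℝ}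

def simplexSlice (d : ι → ℝ) : Set (ι → ℝ) := stdSimplex ℝ ι ∩ {q | d ⬝ᵥ q = 0}

theorem convex_simplexSlice (d : ι → ℝ) : Convex ℝ (simplexSlice d) :=
  (convex_stdSimplex ℝ ι).inter <|
    convex_hyperplane ⟨dotProduct_add d, fun c q => dotProduct_smul c d q⟩ 0

theorem exists_nonpos_of_mem_simplexSlice {q : ι → ℝ} (hq : q ∈ simplexSlice d) :
    ∃ a, d a ≤ 0 := by
  by_contra! hd
  have hterms := (Finset.sum_eq_zero_iff_of_nonneg fun a _ =>
    mul_nonneg (hd a).le (hq.1.1 a)).1 hq.2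
  have : ∑ a, q a = 0 := Finset.sum_eq_zero fun a _ =>
    (mul_eq_zero.1 (hterms a (Finset.mem_univ a))).resolve_left (hd a).ne'
  simp [hq.1.2] at this

theorem exists_mem_simplexSlice_of_nonpos_of_nonneg [DecidableEq ι] {k l : ι} (hk : d k ≤ 0)
    (hl : 0 ≤ d l) : ∃ q ∈ simplexSlice d, ∀ j, j ≠ k → j ≠ l → q j = 0 := by
  rcases hk.eq_or_lt with hk | hk
  · refine ⟨Pi.single k 1, ⟨⟨?_, by simp⟩, by simp [hk]⟩, fun j hj _ => by simp [hj]⟩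
    intro j; by_cases h : j = k <;> simp [h]
  · have hkl : 0 < d l - d k := by linarith
    refine ⟨(d l - d k)⁻¹ • (d l • Pi.single k 1 - d k • Pi.single l 1), ⟨⟨?_, ?_⟩, ?_⟩, ?_⟩
    · have hkl' : k ≠ l := by rintro rfl; linarith
      intro j
      rcases eq_or_ne j k with rfl | hjk
      · simpa [hkl'] using mul_nonneg (inv_nonneg.2 hkl.le) hl
      rcases eq_or_ne j l with rfl | hjl
      · simpa [hjk] using mul_nonneg (inv_nonneg.2 hkl.le) (neg_nonneg.2 hk.le)
      · simp [hjk, hjl]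
    · simpa [← Finset.mul_sum, Finset.sum_sub_distrib] using inv_mul_cancel₀ hkl.ne'
    · simp [dotProduct_sub, mul_comm]
    · intro j hjk hjl; simp [hjk, hjl]

theorem exists_mem_simplexSlice_apply_eq_zero_or (h3 : 3 ≤ Fintype.card ι)
    (hne : (simplexSlice d).Nonempty) {i j : ι} (hij : i ≠ j) :
    (∃ q ∈ simplexSlice d, q i = 0) ∨ ∃ q ∈ simplexSlice d, q j = 0 := by
  classical
  obtain ⟨k, -, hk⟩ := Finset.exists_mem_notMem_of_card_lt_card (s := {i, j})
    (t := Finset.univ) (by simpa using (Finset.card_le_two).trans_lt (by omega))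
  obtain ⟨q, hq⟩ := hne
  obtain ⟨a, ha⟩ := exists_nonpos_of_mem_simplexSlice hq
  obtain ⟨b, hb⟩ := exists_nonpos_of_mem_simplexSlice (d := -d) ⟨hq.1, by simp [hq.2]⟩
  by_contra! h
  -- a point of the slice supported on `{x, y}` must be nonzero at both `i` and `j`
  have hcover : ∀ x y, d x ≤ 0 → 0 ≤ d y → (x = i ∨ y = i) ∧ (x = j ∨ y = j) := by
    intro x y hx hy
    obtain ⟨q, hq, hsupp⟩ := exists_mem_simplexSlice_of_nonpos_of_nonneg hx hy
    constructor
    · by_contra! hne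
      exact h.1 q hq (hsupp i hne.1.symm hne.2.symm)
    · by_contra! hne
      exact h.2 q hq (hsupp j hne.1.symm hne.2.symm)
  simp only [Finset.mem_insert, Finset.mem_singleton, not_or] at hk
  rcases le_total (d k) 0 with hdk | hdk
  · obtain ⟨hbi, hbj⟩ := hcover k b hdk (by simpa using hb)
    exact hij ((hbi.resolve_left hk.1).symm.trans (hbj.resolve_left hk.2))
  · obtain ⟨hai, haj⟩ := hcover a k ha hdk
    exact hij ((hai.resolve_right hk.1).symm.trans (haj.resolve_right hk.2))

theorem joinedIn_or_joinedIn_neg_of_sq_mem_simplexSlice (h3 : 3 ≤ Fintype.card ι)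
    {u v : ι → ℝ} (hu : u ^ 2 ∈ simplexSlice d) (hv : v ^ 2 ∈ simplexSlice d) :
    JoinedIn {y | y ^ 2 ∈ simplexSlice d} u v ∨
      JoinedIn {y | y ^ 2 ∈ simplexSlice d} u (-v) := by
  have hD₀ : ∀ q ∈ simplexSlice d, 0 ≤ q := fun q hq => hq.1.1
  -- at most one coordinate never vanishes on the slice; if `u, v` differ in sign there, aim at `-v`
  by_cases hrigid : ∃ i, u i * v i < 0 ∧ ∀ q ∈ simplexSlice d, q i ≠ 0
  · obtain ⟨i, hi, hqi⟩ := hrigid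
    refine .inr <| joinedIn_of_forall_mul_neg (convex_simplexSlice d) hD₀ hu
      (by simpa using hv) fun j hj => ?_
    have hji : j ≠ i := by
      rintro rfl
      rw [Pi.neg_apply, mul_neg, neg_lt_zero] at hj
      linarith
    exact (exists_mem_simplexSlice_apply_eq_zero_or h3 ⟨_, hu⟩ hji).resolve_right
      fun ⟨q, hq, h⟩ => hqi q hq h
  · push Not at hrigid
    exact .inl (joinedIn_of_forall_mul_neg (convex_simplexSlice d) hD₀ hu hv hrigid)

end SimplexSlice

section SymmetricForms

variable {ι : Type*} [Fintype ι]

theorem mulVec_dotProduct_mulVec_mulVec (S A : Matrix ι ι ℝ) (x : ι → ℝ) :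
    (S *ᵥ x) ⬝ᵥ A *ᵥ (S *ᵥ x) = x ⬝ᵥ (Sᵀ * A * S) *ᵥ x := by
  rw [← mulVec_mulVec, ← mulVec_mulVec, dotProduct_mulVec _ Sᵀ, vecMul_transpose]

theorem dotProduct_diagonal_mulVec [DecidableEq ι] (d y : ι → ℝ) :
    y ⬝ᵥ diagonal d *ᵥ y = d ⬝ᵥ y ^ 2 := by
  simp only [dotProduct, mulVec_diagonal, Pi.pow_apply]
  exact Finset.sum_congr rfl fun i _ => by ring

theorem Matrix.IsSymm.exists_orthogonal_transpose_mul_mul_eq_diagonal [DecidableEq ι]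
    {C : Matrix ι ι ℝ} (hC : C.IsSymm) :
    ∃ (U : Matrix ι ι ℝ) (d : ι → ℝ), Uᵀ * U = 1 ∧ Uᵀ * C * U = diagonal d := by
  have hC' : C.IsHermitian := isHermitian_iff_isSymm.2 hC
  refine ⟨hC'.eigenvectorUnitary, hC'.eigenvalues, ?_, ?_⟩
  · simpa [star_eq_conjTranspose] using Unitary.coe_star_mul_self hC'.eigenvectorUnitary
  · simpa [star_eq_conjTranspose, Unitary.conjStarAlgAut_star_apply] using
      hC'.conjStarAlgAut_star_eigenvectorUnitary

theorem sq_mem_simplexSlice_iff [DecidableEq ι] {d y : ι → ℝ} :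
    y ^ 2 ∈ simplexSlice d ↔ y ⬝ᵥ y = 1 ∧ y ⬝ᵥ diagonal d *ᵥ y = 0 := by
  rw [dotProduct_diagonal_mulVec]
  simp [simplexSlice, stdSimplex, dotProduct, sq, mul_self_nonneg]

def sphereQuadric (C : Matrix ι ι ℝ) : Set (ι → ℝ) := {x | x ⬝ᵥ x = 1 ∧ x ⬝ᵥ C *ᵥ x = 0}

theorem joinedIn_or_joinedIn_neg_of_isSymm (h3 : 3 ≤ Fintype.card ι) {C : Matrix ι ι ℝ}
    (hC : C.IsSymm) {u v : ι → ℝ} (hu : u ∈ sphereQuadric C) (hv : v ∈ sphereQuadric C) :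
    JoinedIn (sphereQuadric C) u v ∨ JoinedIn (sphereQuadric C) u (-v) := by
  classical
  obtain ⟨U, d, hUU, hUCU⟩ := hC.exists_orthogonal_transpose_mul_mul_eq_diagonal
  have hUUt (x : ι → ℝ) : U *ᵥ (Uᵀ *ᵥ x) = x := by
    rw [mulVec_mulVec, mul_eq_one_comm.1 hUU, one_mulVec]
  have hmem (y : ι → ℝ) : U *ᵥ y ∈ sphereQuadric C ↔ y ^ 2 ∈ simplexSlice d := by
    have hdot : (U *ᵥ y) ⬝ᵥ (U *ᵥ y) = y ⬝ᵥ y := by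
      simpa [hUU] using mulVec_dotProduct_mulVec_mulVec U 1 y
    show (U *ᵥ y) ⬝ᵥ (U *ᵥ y) = 1 ∧ (U *ᵥ y) ⬝ᵥ C *ᵥ (U *ᵥ y) = 0 ↔ _
    rw [hdot, mulVec_dotProduct_mulVec_mulVec, hUCU, sq_mem_simplexSlice_iff]
  have hmaps : (U *ᵥ ·) '' {y | y ^ 2 ∈ simplexSlice d} ⊆ sphereQuadric C := by
    rintro _ ⟨y, hy, rfl⟩
    exact (hmem y).2 hy
  have hcont : Continuous (U *ᵥ · : (ι → ℝ) → ι → ℝ) := by fun_prop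
  rcases joinedIn_or_joinedIn_neg_of_sq_mem_simplexSlice h3 ((hmem _).1 ((hUUt u).symm ▸ hu))
    ((hmem _).1 ((hUUt v).symm ▸ hv)) with h | h
  · left
    simpa [hUUt] using (h.map hcont).mono hmaps
  · right
    simpa [hUUt, mulVec_neg] using (h.map hcont).mono hmaps

end SymmetricForms

section Brickman

variable {ι : Type*} [Fintype ι]

theorem brickman (h3 : 3 ≤ Fintype.card ι) {Q R : Matrix ι ι ℝ} (hQ : Q.IsSymm) (hR : R.IsSymm)
    {u v : ι → ℝ} (hu : u ⬝ᵥ u = 1) (hv : v ⬝ᵥ v = 1) {t : ℝ} (ht : t ∈ Icc (0 : ℝ) 1) :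
    ∃ x, x ⬝ᵥ x = 1 ∧ x ⬝ᵥ Q *ᵥ x = (1 - t) * (u ⬝ᵥ Q *ᵥ u) + t * (v ⬝ᵥ Q *ᵥ v) ∧
      x ⬝ᵥ R *ᵥ x = (1 - t) * (u ⬝ᵥ R *ᵥ u) + t * (v ⬝ᵥ R *ᵥ v) := by
  classical
  set p₁ := u ⬝ᵥ Q *ᵥ u
  set p₂ := u ⬝ᵥ R *ᵥ u
  set q₁ := v ⬝ᵥ Q *ᵥ v
  set q₂ := v ⬝ᵥ R *ᵥ v
  set a := q₁ - p₁
  set b := q₂ - p₂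
  by_cases hab : a = 0 ∧ b = 0
  · exact ⟨u, hu, by linear_combination (-t) * hab.1, by linear_combination (-t) * hab.2⟩
  have hab_sq : 0 < a ^ 2 + b ^ 2 := by
    rcases not_and_or.1 hab with h | h <;> positivity
  -- `sphereQuadric C`: the unit vectors whose image lies on the line through `(p₁, p₂)`, `(q₁, q₂)`
  let C : Matrix ι ι ℝ := (-b) • Q + a • R - (-b * p₁ + a * p₂) • 1
  have hC : C.IsSymm := ((hQ.smul _).add (hR.smul _)).sub (isSymm_one.smul _)
  have hCx {x : ι → ℝ} (hx : x ⬝ᵥ x = 1) :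
      x ⬝ᵥ C *ᵥ x = -b * (x ⬝ᵥ Q *ᵥ x) + a * (x ⬝ᵥ R *ᵥ x) - (-b * p₁ + a * p₂) := by
    simp [C, sub_mulVec, add_mulVec, neg_mulVec, smul_mulVec, dotProduct_sub, dotProduct_add, hx]
  obtain ⟨w, ⟨γ, hγ⟩, hwQ, hwR⟩ :
      ∃ w, JoinedIn (sphereQuadric C) u w ∧ w ⬝ᵥ Q *ᵥ w = q₁ ∧ w ⬝ᵥ R *ᵥ w = q₂ := by
    rcases joinedIn_or_joinedIn_neg_of_isSymm h3 hC ⟨hu, by rw [hCx hu]; ring⟩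
      ⟨hv, by rw [hCx hv]; ring⟩ with h | h
    · exact ⟨v, h, rfl, rfl⟩
    · exact ⟨-v, h, by simp [q₁, mulVec_neg], by simp [q₂, mulVec_neg]⟩
  let f : unitInterval → ℝ := fun s => a * (γ s ⬝ᵥ Q *ᵥ γ s) + b * (γ s ⬝ᵥ R *ᵥ γ s)
  have hf : Continuous f := by fun_prop
  obtain ⟨s, hs⟩ := intermediate_value_univ 0 1 hf
    (show a * (p₁ + t * a) + b * (p₂ + t * b) ∈ Icc (f 0) (f 1) by
      simp only [f, Path.source, Path.target, hwQ, hwR]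
      constructor <;> nlinarith [ht.1, ht.2])
  obtain ⟨hunit, hnull⟩ := hγ s
  rw [hCx hunit] at hnull
  -- the image of `γ s` is determined by its coordinates along (`hs`) and across (`hnull`) the line
  refine ⟨γ s, hunit, mul_left_cancel₀ hab_sq.ne' ?_, mul_left_cancel₀ hab_sq.ne' ?_⟩
  · linear_combination a * hs - b * hnull
  · linear_combination b * hs + a * hnull

end Brickman

section JointNumericalRange

variable {ι κ : Type*} [Fintype ι]

def jointNumericalRange (A : κ → Matrix ι ι ℝ) : Set (κ → ℝ) :=
  range fun x k => x ⬝ᵥ A k *ᵥ x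

theorem smul_dotProduct_mulVec_smul (c : ℝ) (A : Matrix ι ι ℝ) (x : ι → ℝ) :
    (c • x) ⬝ᵥ A *ᵥ (c • x) = c ^ 2 * (x ⬝ᵥ A *ᵥ x) := by
  simp only [mulVec_smul, dotProduct_smul, smul_dotProduct, smul_eq_mul]
  ring

theorem smul_mem_jointNumericalRange {A : κ → Matrix ι ι ℝ} {c : ℝ} (hc : 0 ≤ c) {y : κ → ℝ}
    (hy : y ∈ jointNumericalRange A) : c • y ∈ jointNumericalRange A := by
  obtain ⟨x, rfl⟩ := hy
  exact ⟨√c • x, funext fun k =>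
    (smul_dotProduct_mulVec_smul _ _ _).trans (by rw [Real.sq_sqrt hc]; rfl)⟩

theorem jointNumericalRange_comp (A : κ → Matrix ι ι ℝ) {κ' : Type*} (σ : κ' → κ) :
    jointNumericalRange (A ∘ σ) = (fun y => y ∘ σ) '' jointNumericalRange A :=
  range_comp (fun y : κ → ℝ => y ∘ σ) fun x k => x ⬝ᵥ A k *ᵥ x

theorem jointNumericalRange_sum_smul [Fintype κ] (A : κ → Matrix ι ι ℝ) {κ' : Type*}
    (T : Matrix κ' κ ℝ) :
    jointNumericalRange (fun k' => ∑ k, T k' k • A k) = (T *ᵥ ·) '' jointNumericalRange A := by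
  rw [jointNumericalRange, jointNumericalRange, ← range_comp]
  congr 1
  funext x k'
  simp only [sum_mulVec, dotProduct_sum, smul_mulVec, dotProduct_smul, smul_eq_mul]
  rfl

theorem jointNumericalRange_transpose_mul_mul [DecidableEq ι] {S : Matrix ι ι ℝ}
    (hS : IsUnit S.det) (A : κ → Matrix ι ι ℝ) :
    jointNumericalRange (fun k => Sᵀ * A k * S) = jointNumericalRange A := by
  ext y
  constructor
  · rintro ⟨x, rfl⟩
    exact ⟨S *ᵥ x, funext fun k => mulVec_dotProduct_mulVec_mulVec _ _ _⟩
  · rintro ⟨x, rfl⟩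
    refine ⟨S⁻¹ *ᵥ x, funext fun k => ?_⟩
    refine (mulVec_dotProduct_mulVec_mulVec S (A k) _).symm.trans ?_
    rw [mulVec_mulVec, mul_nonsing_inv _ hS, one_mulVec]

theorem add_mem_jointNumericalRange_one [DecidableEq ι] (h3 : 3 ≤ Fintype.card ι)
    {Q R : Matrix ι ι ℝ} (hQ : Q.IsSymm) (hR : R.IsSymm) {y z : Fin 3 → ℝ}
    (hy : y ∈ jointNumericalRange ![1, Q, R]) (hz : z ∈ jointNumericalRange ![1, Q, R]) :
    y + z ∈ jointNumericalRange ![1, Q, R] := by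
  obtain ⟨x₁, rfl⟩ := hy
  obtain ⟨x₂, rfl⟩ := hz
  rcases eq_or_ne x₁ 0 with rfl | hx₁
  · exact ⟨x₂, by ext k; simp⟩
  rcases eq_or_ne x₂ 0 with rfl | hx₂
  · exact ⟨x₁, by ext k; simp⟩
  -- normalise `x₁, x₂` and combine the unit vectors by Brickman with weights `‖x₁‖², ‖x₂‖²`
  have hunit {x : ι → ℝ} (hx : x ≠ 0) :
      ((√(x ⬝ᵥ x))⁻¹ • x) ⬝ᵥ ((√(x ⬝ᵥ x))⁻¹ • x) = 1 := by
    have : 0 < x ⬝ᵥ x := by simpa using dotProduct_star_self_pos_iff.2 hx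
    simp only [dotProduct_smul, smul_dotProduct, smul_eq_mul]
    field_simp
    rw [Real.sq_sqrt this.le]
  have ha : 0 < x₁ ⬝ᵥ x₁ := by simpa using dotProduct_star_self_pos_iff.2 hx₁
  have hb : 0 < x₂ ⬝ᵥ x₂ := by simpa using dotProduct_star_self_pos_iff.2 hx₂
  obtain ⟨e, he, heQ, heR⟩ := brickman h3 hQ hR (hunit hx₁) (hunit hx₂)
    (t := x₂ ⬝ᵥ x₂ / (x₁ ⬝ᵥ x₁ + x₂ ⬝ᵥ x₂))
    ⟨by positivity, (div_le_one (by positivity)).2 (by linarith)⟩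
  simp only [smul_dotProduct_mulVec_smul, inv_pow, Real.sq_sqrt ha.le, Real.sq_sqrt hb.le]
    at heQ heR
  refine ⟨√(x₁ ⬝ᵥ x₁ + x₂ ⬝ᵥ x₂) • e, funext fun k => ?_⟩
  simp only [smul_dotProduct_mulVec_smul, Real.sq_sqrt (add_pos ha hb).le, Pi.add_apply]
  fin_cases k
  · simp [he]
  · simp only [Fin.mk_one, cons_val_one, cons_val_zero, heQ]
    field_simp
    ring
  · simp only [Fin.reduceFinMk, cons_val, heR]
    field_simp
    ring

theorem convex_jointNumericalRange_one [DecidableEq ι] (h3 : 3 ≤ Fintype.card ι)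
    {Q R : Matrix ι ι ℝ} (hQ : Q.IsSymm) (hR : R.IsSymm) :
    Convex ℝ (jointNumericalRange ![1, Q, R]) :=
  ConvexCone.convex
    { carrier := jointNumericalRange ![1, Q, R]
      smul_mem' := fun _ hc _ hy => smul_mem_jointNumericalRange hc.le hy
      add_mem' := fun _ hy _ hz => add_mem_jointNumericalRange_one h3 hQ hR hy hz }

open scoped MatrixOrder in
theorem convex_jointNumericalRange_of_posDef (h3 : 3 ≤ Fintype.card ι) {P Q R : Matrix ι ι ℝ}
    (hP : P.PosDef) (hQ : Q.IsSymm) (hR : R.IsSymm) :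
    Convex ℝ (jointNumericalRange ![P, Q, R]) := by
  classical
  obtain ⟨S, rfl⟩ := CStarAlgebra.nonneg_iff_eq_star_mul_self.mp hP.posSemidef.nonneg
  have hS : IsUnit S.det := isUnit_iff_ne_zero.2 fun h => by simpa [h] using hP.det_pos
  -- the substitution `x = S⁻¹ y` turns `P = Sᵀ S` into the identity
  rw [← jointNumericalRange_transpose_mul_mul (isUnit_nonsing_inv_det S hS)]
  convert convex_jointNumericalRange_one h3 (Q := S⁻¹ᵀ * Q * S⁻¹) (R := S⁻¹ᵀ * R * S⁻¹)
    (by simp [IsSymm, transpose_mul, hQ.eq, Matrix.mul_assoc])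
    (by simp [IsSymm, transpose_mul, hR.eq, Matrix.mul_assoc]) using 2
  funext k
  fin_cases k
  · calc S⁻¹ᵀ * (star S * S) * S⁻¹ = (S * S⁻¹)ᵀ * (S * S⁻¹) := by
          rw [transpose_mul, star_eq_conjTranspose, conjTranspose_eq_transpose_of_trivial]
          noncomm_ring
      _ = 1 := by rw [mul_nonsing_inv _ hS, transpose_one, Matrix.one_mul]
  · rfl
  · rfl

theorem convex_jointNumericalRange_of_posDef_sum (h3 : 3 ≤ Fintype.card ι)
    {A : Fin 3 → Matrix ι ι ℝ} (hA : ∀ k, (A k).IsSymm) {s : Fin 3 → ℝ}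
    (hs : (∑ k, s k • A k).PosDef) : Convex ℝ (jointNumericalRange A) := by
  wlog hs₀ : s 0 ≠ 0 generalizing A s
  · obtain ⟨i, hi⟩ : ∃ i, s i ≠ 0 := by
      by_contra! h
      obtain ⟨j⟩ : Nonempty ι := Fintype.card_pos_iff.1 (by omega)
      simp only [h, zero_smul, Finset.sum_const_zero] at hs
      simpa using hs.dotProduct_mulVec_pos (x := fun _ => 1) fun h => one_ne_zero (congrFun h j)
    let σ := Equiv.swap (0 : Fin 3) i
    have hA_eq : A = (A ∘ σ) ∘ σ := by funext k; simp [σ]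
    rw [hA_eq, jointNumericalRange_comp]
    refine (this (fun k => hA (σ k)) (s := s ∘ σ) ?_ (by simpa [σ] using hi)).linear_image
      (LinearMap.funLeft ℝ ℝ σ)
    simpa [Equiv.sum_comp σ (fun k => s k • A k)] using hs
  let T : Matrix (Fin 3) (Fin 3) ℝ :=
    !![(s 0)⁻¹, -(s 0)⁻¹ * s 1, -(s 0)⁻¹ * s 2; 0, 1, 0; 0, 0, 1]
  have hA_eq : A = fun k => ∑ l, T k l • ![∑ k, s k • A k, A 1, A 2] l := by
    funext k
    fin_cases k
    · simp [T, Fin.sum_univ_three, smul_smul, inv_mul_cancel₀ hs₀, add_assoc]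
    all_goals simp [T, Fin.sum_univ_three]
  rw [hA_eq, jointNumericalRange_sum_smul]
  exact (convex_jointNumericalRange_of_posDef h3 hs (hA 1) (hA 2)).linear_image T.mulVecLin

end JointNumericalRange

section LagrangeDuality

variable {W : Set (Fin 3 → ℝ)} {v m₁ M₁ m₂ M₂ : ℝ}

theorem exists_lagrangian_lt_of_convex (hW : Convex ℝ W)
    (hlow : ∀ y ∈ W, y 1 ∈ Ioo m₁ M₁ → y 2 ∈ Ioo m₂ M₂ → v ≤ y 0)
    (hslater : ∃ y ∈ W, y 1 ∈ Ioo m₁ M₁ ∧ y 2 ∈ Ioo m₂ M₂) :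
    ∃ r₁ r₂ : ℝ, ∀ q ∈ univ.pi ![Iio v, Ioo m₁ M₁, Ioo m₂ M₂], ∀ y ∈ W,
      q 0 + r₁ * q 1 + r₂ * q 2 < y 0 + r₁ * y 1 + r₂ * y 2 := by
  obtain ⟨y₀, hy₀, hy₀₁, hy₀₂⟩ := hslater
  set U := univ.pi ![Iio v, Ioo m₁ M₁, Ioo m₂ M₂]
  have hU {q : Fin 3 → ℝ} : q ∈ U ↔ q 0 < v ∧ q 1 ∈ Ioo m₁ M₁ ∧ q 2 ∈ Ioo m₂ M₂ := by
    simp [U, Fin.forall_fin_succ]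
  have hU_open : IsOpen U :=
    isOpen_set_pi finite_univ fun i _ => by fin_cases i <;> simp [isOpen_Iio, isOpen_Ioo]
  have hU_convex : Convex ℝ U :=
    convex_pi fun i _ => by fin_cases i <;> simp [convex_Iio, convex_Ioo]
  have hdisj : Disjoint U W := disjoint_left.2 fun y hyU hyW =>
    (hlow y hyW (hU.1 hyU).2.1 (hU.1 hyU).2.2).not_gt (hU.1 hyU).1
  obtain ⟨f, α, hfU, hfW⟩ := geometric_hahn_banach_open hU_convex hU_open hW hdisj
  let c : Fin 3 → ℝ := fun k => f fun j => if k = j then 1 else 0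
  have hf (y : Fin 3 → ℝ) : f y = c 0 * y 0 + c 1 * y 1 + c 2 * y 2 := by
    rw [← f.coe_coe, f.toLinearMap.pi_apply_eq_sum_univ, Fin.sum_univ_three]
    simp only [smul_eq_mul, mul_comm, c, ContinuousLinearMap.coe_coe]
  have hsep {q y} (hq : q ∈ U) (hy : y ∈ W) : f q < f y := (hfU q hq).trans_le (hfW y hy)
  -- a point of `U` lying below the Slater point `y₀` in the first coordinate forces `c 0 > 0`
  have hc₀ : 0 < c 0 := by
    by_contra! hc
    have := hsep (hU (q := ![min (v - 1) (y₀ 0), y₀ 1, y₀ 2]) |>.2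
      ⟨min_lt_of_left_lt (sub_one_lt v), hy₀₁, hy₀₂⟩) hy₀
    rw [hf, hf] at this
    simp only [Fin.isValue, cons_val_zero, cons_val_one, cons_val, add_lt_add_iff_right] at this
    nlinarith [mul_le_mul_of_nonpos_left (min_le_right (v - 1) (y₀ 0)) hc]
  refine ⟨c 1 / c 0, c 2 / c 0, fun q hq y hy => ?_⟩
  have := hsep hq hy
  rw [hf, hf] at this
  rw [← mul_lt_mul_iff_right₀ hc₀]
  field_simp
  linarith

theorem exists_lagrangian_le_of_convex (hW : Convex ℝ W)
    (hlow : ∀ y ∈ W, y 1 ∈ Ioo m₁ M₁ → y 2 ∈ Ioo m₂ M₂ → v ≤ y 0)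
    (hslater : ∃ y ∈ W, y 1 ∈ Ioo m₁ M₁ ∧ y 2 ∈ Ioo m₂ M₂) :
    ∃ r₁ r₂ : ℝ, ∀ y ∈ W, ∀ p₁ ∈ Icc m₁ M₁, ∀ p₂ ∈ Icc m₂ M₂,
      v + r₁ * p₁ + r₂ * p₂ ≤ y 0 + r₁ * y 1 + r₂ * y 2 := by
  obtain ⟨r₁, r₂, hsep⟩ := exists_lagrangian_lt_of_convex hW hlow hslater
  obtain ⟨y₀, -, hy₀₁, hy₀₂⟩ := hslater
  refine ⟨r₁, r₂, fun y hy p₁ hp₁ p₂ hp₂ => ?_⟩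
  have hclosed : IsClosed {q : Fin 3 → ℝ | q 0 + r₁ * q 1 + r₂ * q 2 ≤ y 0 + r₁ * y 1 + r₂ * y 2} :=
    isClosed_le (by fun_prop) continuous_const
  have hcl := hclosed.closure_subset_iff.2 fun q hq => (hsep q hq y hy).le
  rw [closure_pi_set] at hcl
  refine hcl (show ![v, p₁, p₂] ∈ _ from fun i _ => ?_)
  fin_cases i
  · simp [closure_Iio]
  · simp [closure_Ioo (hy₀₁.1.trans hy₀₁.2).ne, hp₁]
  · simp [closure_Ioo (hy₀₂.1.trans hy₀₂.2).ne, hp₂]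

end LagrangeDuality

section QuadraticProgram

variable {ι : Type*} [Fintype ι]

theorem dotProduct_add_smul_add_smul_mulVec (A₀ A₁ A₂ : Matrix ι ι ℝ) (c₁ c₂ : ℝ) (x : ι → ℝ) :
    x ⬝ᵥ (A₀ + c₁ • A₁ + c₂ • A₂) *ᵥ x =
      x ⬝ᵥ A₀ *ᵥ x + c₁ * (x ⬝ᵥ A₁ *ᵥ x) + c₂ * (x ⬝ᵥ A₂ *ᵥ x) := by
  simp [add_mulVec, smul_mulVec, dotProduct_add]

theorem posSemidef_of_forall_le_dotProduct_mulVec {A : Matrix ι ι ℝ} (hA : A.IsSymm) {K : ℝ}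
    (hK : ∀ x, K ≤ x ⬝ᵥ A *ᵥ x) : A.PosSemidef := by
  refine PosSemidef.of_dotProduct_mulVec_nonneg (isHermitian_iff_isSymm.2 hA) fun x => ?_
  rw [star_trivial]
  by_contra! hneg
  have := hK (√((|K| + 1) / -(x ⬝ᵥ A *ᵥ x)) • x)
  rw [smul_dotProduct_mulVec_smul, Real.sq_sqrt (div_nonneg (by positivity) (by linarith))] at this
  rw [div_neg, neg_mul, div_mul_cancel₀ _ hneg.ne] at this
  linarith [neg_abs_le K]

theorem exists_mem_Icc_negPart_mul_sub_posPart_mul (r : ℝ) {m M : ℝ} (h : m ≤ M) :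
    ∃ p ∈ Icc m M, r⁻ * m - r⁺ * M = -(r * p) := by
  rcases le_total 0 r with hr | hr
  · exact ⟨M, ⟨h, le_rfl⟩, by simp [posPart_eq_self.2 hr, negPart_eq_zero.2 hr]⟩
  · exact ⟨m, ⟨le_rfl, h⟩, by simp [posPart_eq_zero.2 hr, negPart_eq_neg.2 hr]⟩

variable {A₀ A₁ A₂ : Matrix ι ι ℝ} {m₁ M₁ m₂ M₂ : ℝ}

theorem dual_le_primal {lam₁ mu₁ lam₂ mu₂ : ℝ} (hlam₁ : 0 ≤ lam₁) (hmu₁ : 0 ≤ mu₁)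
    (hlam₂ : 0 ≤ lam₂) (hmu₂ : 0 ≤ mu₂)
    (hpsd : (A₀ + (mu₁ - lam₁) • A₁ + (mu₂ - lam₂) • A₂).PosSemidef) {x : ι → ℝ}
    (hm₁ : m₁ ≤ x ⬝ᵥ A₁ *ᵥ x) (hM₁ : x ⬝ᵥ A₁ *ᵥ x ≤ M₁)
    (hm₂ : m₂ ≤ x ⬝ᵥ A₂ *ᵥ x) (hM₂ : x ⬝ᵥ A₂ *ᵥ x ≤ M₂) :
    lam₁ * m₁ - mu₁ * M₁ + lam₂ * m₂ - mu₂ * M₂ ≤ x ⬝ᵥ A₀ *ᵥ x := by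
  have := hpsd.dotProduct_mulVec_nonneg x
  rw [star_trivial, dotProduct_add_smul_add_smul_mulVec] at this
  nlinarith [mul_le_mul_of_nonneg_left hm₁ hlam₁, mul_le_mul_of_nonneg_left hM₁ hmu₁,
    mul_le_mul_of_nonneg_left hm₂ hlam₂, mul_le_mul_of_nonneg_left hM₂ hmu₂]

theorem exists_dual_ge_of_forall_le_primal (h3 : 3 ≤ Fintype.card ι) (h₀ : A₀.IsSymm)
    (h₁ : A₁.IsSymm) (h₂ : A₂.IsSymm)
    (hs : ∃ s₀ s₁ s₂ : ℝ, (s₀ • A₀ + s₁ • A₁ + s₂ • A₂).PosDef)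
    (hslater : ∃ x : ι → ℝ, m₁ < x ⬝ᵥ A₁ *ᵥ x ∧ x ⬝ᵥ A₁ *ᵥ x < M₁ ∧
      m₂ < x ⬝ᵥ A₂ *ᵥ x ∧ x ⬝ᵥ A₂ *ᵥ x < M₂) {z : ℝ}
    (hz : ∀ x : ι → ℝ, m₁ ≤ x ⬝ᵥ A₁ *ᵥ x → x ⬝ᵥ A₁ *ᵥ x ≤ M₁ →
      m₂ ≤ x ⬝ᵥ A₂ *ᵥ x → x ⬝ᵥ A₂ *ᵥ x ≤ M₂ → z ≤ x ⬝ᵥ A₀ *ᵥ x) :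
    ∃ lam₁ mu₁ lam₂ mu₂ : ℝ, 0 ≤ lam₁ ∧ 0 ≤ mu₁ ∧ 0 ≤ lam₂ ∧ 0 ≤ mu₂ ∧
      (A₀ + (mu₁ - lam₁) • A₁ + (mu₂ - lam₂) • A₂).PosSemidef ∧
      z ≤ lam₁ * m₁ - mu₁ * M₁ + lam₂ * m₂ - mu₂ * M₂ := by
  obtain ⟨s₀, s₁, s₂, hs⟩ := hs
  obtain ⟨x₀, hx₀⟩ := hslater
  have hconv : Convex ℝ (jointNumericalRange ![A₀, A₁, A₂]) :=
    convex_jointNumericalRange_of_posDef_sum h3 (fun k => by fin_cases k <;> assumption)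
      (s := ![s₀, s₁, s₂]) (by simpa [Fin.sum_univ_three] using hs)
  obtain ⟨r₁, r₂, hr⟩ := exists_lagrangian_le_of_convex hconv (v := z)
    (by rintro _ ⟨x, rfl⟩ h₁ h₂; exact hz x h₁.1.le h₁.2.le h₂.1.le h₂.2.le)
    ⟨_, ⟨x₀, rfl⟩, ⟨hx₀.1, hx₀.2.1⟩, ⟨hx₀.2.2.1, hx₀.2.2.2⟩⟩
  obtain ⟨p₁, hp₁, hval₁⟩ := exists_mem_Icc_negPart_mul_sub_posPart_mul r₁ (hx₀.1.trans hx₀.2.1).le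
  obtain ⟨p₂, hp₂, hval₂⟩ :=
    exists_mem_Icc_negPart_mul_sub_posPart_mul r₂ (hx₀.2.2.1.trans hx₀.2.2.2).le
  have hlagr (x : ι → ℝ) : z + r₁ * p₁ + r₂ * p₂ ≤ x ⬝ᵥ (A₀ + r₁ • A₁ + r₂ • A₂) *ᵥ x := by
    rw [dotProduct_add_smul_add_smul_mulVec]
    exact hr _ ⟨x, rfl⟩ p₁ hp₁ p₂ hp₂
  refine ⟨r₁⁻, r₁⁺, r₂⁻, r₂⁺, negPart_nonneg _, posPart_nonneg _, negPart_nonneg _,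
    posPart_nonneg _, ?_, ?_⟩
  · rw [posPart_sub_negPart, posPart_sub_negPart]
    exact posSemidef_of_forall_le_dotProduct_mulVec ((h₀.add (h₁.smul _)).add (h₂.smul _)) hlagr
  · have := hlagr 0
    simp only [zero_dotProduct] at this
    linarith

end QuadraticProgram

theorem strong_duality_HQPB_general (n : ℕ) (hn : 3 ≤ n)
    (A₀ A₁ A₂ : Matrix (Fin n) (Fin n) ℝ)
    (h₀ : A₀.IsSymm) (h₁ : A₁.IsSymm) (h₂ : A₂.IsSymm)
    (hs : ∃ s₀ s₁ s₂ : ℝ, (s₀ • A₀ + s₁ • A₁ + s₂ • A₂).PosDef)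
    (m₁ M₁ m₂ M₂ : ℝ)
    (hslater : ∃ xt : Fin n → ℝ,
      m₁ < xt ⬝ᵥ A₁ *ᵥ xt ∧ xt ⬝ᵥ A₁ *ᵥ xt < M₁ ∧
      m₂ < xt ⬝ᵥ A₂ *ᵥ xt ∧ xt ⬝ᵥ A₂ *ᵥ xt < M₂) :
    sInf {v : EReal | ∃ x : Fin n → ℝ,
        m₁ ≤ x ⬝ᵥ A₁ *ᵥ x ∧ x ⬝ᵥ A₁ *ᵥ x ≤ M₁ ∧
        m₂ ≤ x ⬝ᵥ A₂ *ᵥ x ∧ x ⬝ᵥ A₂ *ᵥ x ≤ M₂ ∧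
        v = (x ⬝ᵥ A₀ *ᵥ x : ℝ)} =
    sSup {v : EReal | ∃ lam₁ mu₁ lam₂ mu₂ : ℝ,
        0 ≤ lam₁ ∧ 0 ≤ mu₁ ∧ 0 ≤ lam₂ ∧ 0 ≤ mu₂ ∧
        (A₀ + (mu₁ - lam₁) • A₁ + (mu₂ - lam₂) • A₂).PosSemidef ∧
        v = (lam₁ * m₁ - mu₁ * M₁ + lam₂ * m₂ - mu₂ * M₂ : ℝ)} := by
  apply le_antisymm
  · refine EReal.ge_of_forall_gt_iff_ge.1 fun z hz => ?_
    obtain ⟨lam₁, mu₁, lam₂, mu₂, hlam₁, hmu₁, hlam₂, hmu₂, hpsd, hval⟩ :=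
      exists_dual_ge_of_forall_le_primal (by simpa using hn) h₀ h₁ h₂ hs hslater
        fun x hm₁ hM₁ hm₂ hM₂ =>
          EReal.coe_le_coe_iff.1 (hz.le.trans (sInf_le ⟨x, hm₁, hM₁, hm₂, hM₂, rfl⟩))
    exact (EReal.coe_le_coe_iff.2 hval).trans
      (le_sSup ⟨lam₁, mu₁, lam₂, mu₂, hlam₁, hmu₁, hlam₂, hmu₂, hpsd, rfl⟩)
  · refine sSup_le fun _ ⟨lam₁, mu₁, lam₂, mu₂, hlam₁, hmu₁, hlam₂, hmu₂, hpsd, hv⟩ =>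
      le_sInf fun _ ⟨x, hm₁, hM₁, hm₂, hM₂, hx⟩ => ?_
    rw [hv, hx, EReal.coe_le_coe_iff]
    exact dual_le_primal hlam₁ hmu₁ hlam₂ hmu₂ hpsd hm₁ hM₁ hm₂ hM₂

theorem strong_duality_HQPB (n : ℕ) (hn : 3 ≤ n)
    (A₀ A₁ A₂ : Matrix (Fin n) (Fin n) ℝ)
    (h₀ : A₀.IsSymm) (h₁ : A₁.IsSymm) (h₂ : A₂.IsSymm)
    (hs : ∃ s₀ s₁ s₂ : ℝ, (s₀ • A₀ + s₁ • A₁ + s₂ • A₂).PosDef)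
    (m₁ M₁ m₂ M₂ : ℝ) (hb₁ : m₁ < M₁) (hb₂ : m₂ < M₂)
    (hslater : ∃ xt : Fin n → ℝ,
      m₁ < xt ⬝ᵥ A₁ *ᵥ xt ∧ xt ⬝ᵥ A₁ *ᵥ xt < M₁ ∧
      m₂ < xt ⬝ᵥ A₂ *ᵥ xt ∧ xt ⬝ᵥ A₂ *ᵥ xt < M₂) :
    sInf {v : EReal | ∃ x : Fin n → ℝ,
        m₁ ≤ x ⬝ᵥ A₁ *ᵥ x ∧ x ⬝ᵥ A₁ *ᵥ x ≤ M₁ ∧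
        m₂ ≤ x ⬝ᵥ A₂ *ᵥ x ∧ x ⬝ᵥ A₂ *ᵥ x ≤ M₂ ∧
        v = (x ⬝ᵥ A₀ *ᵥ x : ℝ)} =
    sSup {v : EReal | ∃ lam₁ mu₁ lam₂ mu₂ : ℝ,
        0 ≤ lam₁ ∧ 0 ≤ mu₁ ∧ 0 ≤ lam₂ ∧ 0 ≤ mu₂ ∧
        (A₀ + (mu₁ - lam₁) • A₁ + (mu₂ - lam₂) • A₂).PosSemidef ∧
        v = (lam₁ * m₁ - mu₁ * M₁ + lam₂ * m₂ - mu₂ * M₂ : ℝ)} :=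
  strong_duality_HQPB_general n hn A₀ A₁ A₂ h₀ h₁ h₂ hs m₁ M₁ m₂ M₂ hslater
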